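/- Let Γ be a finite simplicial graph. Then Γ has hypergraph index 1 if and only if Γ is a CFS graph and Γ is not a join A ⋆ B with A and B each containing a pair of non-adjacent vertices. -/

import Mathlib

open Relation

variable {V : Type*}

/-- Relators of the right-angled Coxeter group of a simplicial graph. -/
def racgRels (G : SimpleGraph V) : Set (FreeGroup V) :=
  {r | (∃ v, r = FreeGroup.of v * FreeGroup.of v) ∨
       (∃ v w, G.Adj v w ∧
          r = FreeGroup.of v * FreeGroup.of w * FreeGroup.of v * FreeGroup.of w)}

/-- The right-angled Coxeter group `W_Γ` of a simplicial graph `Γ`. -/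
abbrev RACG (G : SimpleGraph V) := PresentedGroup (racgRels G)

/-- The generator of `W_Γ` corresponding to a vertex. -/
def racgGen (G : SimpleGraph V) (v : V) : RACG G := PresentedGroup.of v

/-- Word length with respect to the vertex generators. -/
noncomputable def wordLength (G : SimpleGraph V) (g : RACG G) : ℕ :=
  sInf {n | ∃ l : List V, l.length = n ∧ (l.map (racgGen G)).prod = g}

/-- Word metric on `W_Γ`. -/
noncomputable def wdist (G : SimpleGraph V) (g h : RACG G) : ℕ :=
  wordLength G (g⁻¹ * h)

/-- The special subgroup `W_T` generated by a subset `T` of the vertices. -/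
def specialSubgroup (G : SimpleGraph V) (T : Set V) : Subgroup (RACG G) :=
  Subgroup.closure (racgGen G '' T)

/-- The left coset `g W_T` as a subset of `W_Γ`. -/
def leftCosetOf (G : SimpleGraph V) (g : RACG G) (T : Set V) : Set (RACG G) :=
  (g * ·) '' (specialSubgroup G T : Set (RACG G))

/-- The `C`-neighborhood of a subset in the word metric. -/
noncomputable def nbhd (G : SimpleGraph V) (C : ℕ) (A : Set (RACG G)) : Set (RACG G) :=
  {x | ∃ a ∈ A, wdist G x a ≤ C}

/-- A subset of `W_Γ` has infinite diameter. -/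
def InfDiam (G : SimpleGraph V) (A : Set (RACG G)) : Prop :=
  ∀ D : ℕ, ∃ x ∈ A, ∃ y ∈ A, D ≤ wdist G x y

/-- Two subsets are `C`-Hausdorff close. -/
def HausCloseWith (G : SimpleGraph V) (C : ℕ) (A B : Set (RACG G)) : Prop :=
  A ⊆ nbhd G C B ∧ B ⊆ nbhd G C A

/-- Two subsets are Hausdorff close. -/
def HausClose (G : SimpleGraph V) (A B : Set (RACG G)) : Prop :=
  ∃ C : ℕ, HausCloseWith G C A B

/-- A pair of distinct non-adjacent vertices. -/
def NonAdjPair (G : SimpleGraph V) (s t : V) : Prop := s ≠ t ∧ ¬ G.Adj s t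

/-- A set of vertices containing a pair of non-adjacent vertices. -/
def HasNonAdjPair (G : SimpleGraph V) (A : Set V) : Prop :=
  ∃ s ∈ A, ∃ t ∈ A, NonAdjPair G s t

/-- `L` is the join `A ⋆ B` (on the level of vertex sets of induced subgraphs). -/
def JoinDecomp (G : SimpleGraph V) (L A B : Set V) : Prop :=
  A ∪ B = L ∧ ∀ a ∈ A, ∀ b ∈ B, G.Adj a b

/-- `L` is a join of two induced subgraphs, each containing a pair of
non-adjacent vertices. -/
def IsWidePre (G : SimpleGraph V) (L : Set V) : Prop :=
  ∃ A B : Set V, JoinDecomp G L A B ∧ HasNonAdjPair G A ∧ HasNonAdjPair G B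

/-- The wide subgraphs `Ω(Γ)`: maximal joins of two induced subgraphs each
containing a pair of non-adjacent vertices. -/
def IsWide (G : SimpleGraph V) (L : Set V) : Prop :=
  IsWidePre G L ∧ ∀ L', IsWidePre G L' → L ⊆ L' → L = L'

/-- `L = A ⋆ K` with `A` a pair of non-adjacent vertices and `K` a nonempty clique. -/
def IsStripDecomp (G : SimpleGraph V) (L A K : Set V) : Prop :=
  (∃ s t, NonAdjPair G s t ∧ A = {s, t}) ∧ K.Nonempty ∧ G.IsClique K ∧
    A ∪ K = L ∧ ∀ a ∈ A, ∀ k ∈ K, G.Adj a k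

def IsStripPre (G : SimpleGraph V) (L : Set V) : Prop :=
  ∃ A K : Set V, IsStripDecomp G L A K

/-- The strip subgraphs `Ψ(Γ)`: subgraphs of the form `A ⋆ K` as above that are
not properly contained in any wide subgraph nor in any other such subgraph. -/
def IsStrip (G : SimpleGraph V) (L : Set V) : Prop :=
  IsStripPre G L ∧ (∀ L', IsWide G L' → L ⊆ L' → L = L') ∧
    (∀ L', IsStripPre G L' → L ⊆ L' → L = L')

/-- Two hyperedges of a hypergraph intersect in a pair of non-adjacent vertices. -/
def hypStep (G : SimpleGraph V) (E : Set (Set V)) (H H' : Set V) : Prop :=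
  H ∈ E ∧ H' ∈ E ∧ ∃ s t, NonAdjPair G s t ∧ s ∈ H ∩ H' ∧ t ∈ H ∩ H'

/-- The hyperedge sets of the lambda hypergraphs `Λ_i(Γ)`. -/
def Lam (G : SimpleGraph V) : ℕ → Set (Set V)
  | 0 => {L | IsWide G L ∨ IsStrip G L}
  | (i+1) =>
      {Z | ∃ H ∈ Lam G i,
        Z = ⋃₀ {H' | H' ∈ Lam G i ∧ ReflTransGen (hypStep G (Lam G i)) H H'}}

/-- A hyperedge `H` of `Λ_i(Γ)` is a member of the hyperedge of `Λ_{i+1}(Γ)`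
formed as the union of its `≡_i`-equivalence class. -/
def memberOf (G : SimpleGraph V) (i : ℕ) (H Z : Set V) : Prop :=
  H ∈ Lam G i ∧
    Z = ⋃₀ {H' | H' ∈ Lam G i ∧ ReflTransGen (hypStep G (Lam G i)) H H'}

/-- `Γ` has hypergraph index exactly `h ∈ ℕ`. -/
def HasHypIndex (G : SimpleGraph V) (h : ℕ) : Prop :=
  (∃ L, IsWide G L) ∧ (∃ H ∈ Lam G h, Set.univ ⊆ H) ∧
    ∀ h' < h, ¬ ∃ H ∈ Lam G h', Set.univ ⊆ H

/-- The hypergraph index of `Γ` as an element of `ℕ ∪ {∞}`. -/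
noncomputable def hypIndex (G : SimpleGraph V) : ℕ∞ :=
  sInf {x : ℕ∞ | ∃ m : ℕ, x = (m : ℕ∞) ∧ (∃ L, IsWide G L) ∧
          ∃ H ∈ Lam G m, Set.univ ⊆ H}

/-- The realization `R_i(Γ)`: cosets `g W_H` for `H` a hyperedge of `Λ_i(Γ)`
whose induced subgraph is not a strip subgraph. -/
def realization (G : SimpleGraph V) (i : ℕ) : Set (Set (RACG G)) :=
  {L | ∃ (g : RACG G) (H : Set V), H ∈ Lam G i ∧ ¬ IsStrip G H ∧
        L = leftCosetOf G g H}

/-- A coset `g W_H` (with `H ∈ Λ_i`) is a member of `g' W_{H'}` (with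
`H' ∈ Λ_{i+1}`). -/
def cosetMemberOf (G : SimpleGraph V) (i : ℕ) (L L' : Set (RACG G)) : Prop :=
  ∃ (g g' : RACG G) (H H' : Set V),
    memberOf G i H H' ∧ L = leftCosetOf G g H ∧ L' = leftCosetOf G g' H' ∧ L ⊆ L'

/-- The maximal size of a clique of `Γ`. -/
noncomputable def maxCliqueSize (G : SimpleGraph V) : ℕ :=
  sSup {n : ℕ | ∃ K : Set V, G.IsClique K ∧ K.ncard = n}

/-- A combinatorial path in the Cayley graph of `W_Γ`. -/
def IsEdgePath (G : SimpleGraph V) (p : ℕ → RACG G) (n : ℕ) : Prop :=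
  ∀ k < n, wdist G (p k) (p (k+1)) ≤ 1

/-- `Y` is `C`-path connected: any two points of `Y` are joined by a path in the
Cayley graph staying in the `C`-neighborhood of `Y`. -/
def CPathConn (G : SimpleGraph V) (C : ℕ) (Y : Set (RACG G)) : Prop :=
  ∀ y₁ ∈ Y, ∀ y₂ ∈ Y, ∃ (n : ℕ) (p : ℕ → RACG G),
    p 0 = y₁ ∧ p n = y₂ ∧ IsEdgePath G p n ∧ ∀ k ≤ n, p k ∈ nbhd G C Y

/-- The coarse intersection degree of a collection `M` of subsets of `W_Γ` is at
most `d`. -/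
def CoarseIntDegLE (G : SimpleGraph V) (M : Set (Set (RACG G))) (d : ℕ) : Prop :=
  ∃ (Ms : ℕ → Set (Set (RACG G))) (P : ℕ → Set (RACG G) → Set (Set (RACG G)))
    (C : ℕ), 0 < C ∧ Ms 0 = M ∧
    (∀ i, 1 ≤ i → i ≤ d → ∀ A ∈ Ms i,
      (P i A ⊆ Ms (i-1)) ∧
      (A ⊆ ⋃ B ∈ P i A, nbhd G C B) ∧
      ((⋃ B ∈ P i A, B) ⊆ A) ∧
      (∀ A₁ ∈ P i A, ∀ A₂ ∈ P i A, ∃ (n : ℕ) (ch : ℕ → Set (RACG G)),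
        ch 0 = A₁ ∧ ch n = A₂ ∧ (∀ k ≤ n, ch k ∈ P i A) ∧
        (∀ k < n, InfDiam G (nbhd G C (ch k) ∩ ch (k+1)) ∧
          CPathConn G C (nbhd G C (ch k) ∩ ch (k+1))))) ∧
    (∃ A ∈ Ms d, ∀ B ∈ M, B ⊆ nbhd G C A)

/-- The coarse intersection degree of `M` is exactly `d`. -/
def CoarseIntDeg (G : SimpleGraph V) (M : Set (Set (RACG G))) (d : ℕ) : Prop :=
  CoarseIntDegLE G M d ∧ ∀ d' < d, ¬ CoarseIntDegLE G M d'

/-- A `(K, C)`-quasi-isometry between two right-angled Coxeter groups with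
their word metrics. -/
def IsQI {V' : Type*} (G : SimpleGraph V) (G' : SimpleGraph V') (K C : ℝ)
    (f : RACG G → RACG G') : Prop :=
  (∀ a b : RACG G,
      (1/K) * (wdist G a b : ℝ) - C ≤ (wdist G' (f a) (f b) : ℝ) ∧
      (wdist G' (f a) (f b) : ℝ) ≤ K * (wdist G a b : ℝ) + C) ∧
  (∀ y : RACG G', ∃ x : RACG G, (wdist G' y (f x) : ℝ) ≤ C)

/-- `Q` is the vertex set of an induced `4`-cycle of `Γ`. -/
def IsInducedSquare (G : SimpleGraph V) (Q : Set V) : Prop :=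
  ∃ a b c d : V, Q = {a, b, c, d} ∧
    G.Adj a b ∧ G.Adj b c ∧ G.Adj c d ∧ G.Adj d a ∧
    a ≠ c ∧ b ≠ d ∧ ¬ G.Adj a c ∧ ¬ G.Adj b d

/-- Adjacency in the square graph of `Γ`. -/
def sqAdj (G : SimpleGraph V) (Q Q' : Set V) : Prop :=
  IsInducedSquare G Q ∧ IsInducedSquare G Q' ∧ Q ≠ Q' ∧
    ∃ s t, NonAdjPair G s t ∧ s ∈ Q ∩ Q' ∧ t ∈ Q ∩ Q'

/-- `Γ` is a CFS graph. -/
def IsCFS (G : SimpleGraph V) : Prop :=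
  ∃ Om K : Set V, Om ∪ K = Set.univ ∧ G.IsClique K ∧
    (∀ o ∈ Om, ∀ k ∈ K, G.Adj o k) ∧
    ∃ Q₀, IsInducedSquare G Q₀ ∧
      ⋃₀ {Q | IsInducedSquare G Q ∧ ReflTransGen (sqAdj G) Q₀ Q} = Om

/-- Rank `n` pairs of non-adjacent vertices. -/
def IsRankPair (G : SimpleGraph V) : ℕ → V → V → Prop
  | 0, _, _ => False
  | 1, s, t => NonAdjPair G s t ∧ ¬ ∃ Q, IsInducedSquare G Q ∧ s ∈ Q ∧ t ∈ Q
  | (n+2), s, t => NonAdjPair G s t ∧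
      ((∀ s₁ ∈ G.neighborSet s, ∀ s₂ ∈ G.neighborSet s,
          NonAdjPair G s₁ s₂ → IsRankPair G (n+1) s₁ s₂) ∨
       (∀ t₁ ∈ G.neighborSet t, ∀ t₂ ∈ G.neighborSet t,
          NonAdjPair G t₁ t₂ → IsRankPair G (n+1) t₁ t₂))

/-- The hypergraph index spectrum of `W_Γ`. -/
noncomputable def hypSpectrum (G : SimpleGraph V) : Set ℕ∞ :=
  {x | ∃ T : Set V,
        (hypIndex (G.induce T) ≠ ⊤ ∧
          ∀ T' : Set V, hypIndex (G.induce T') ≠ ⊤ → T ⊆ T' → T = T') ∧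
        hypIndex (G.induce T) = x}

/-! A strip shares a non-adjacent pair with no other hyperedge of `Λ₀(Γ)`: the pair `{p, q}`
of the strip, joined to a second non-adjacent pair, would span a wide subgraph containing the
strip. Hence a hyperedge of `Λ₁(Γ)` covering `Γ`, when none of `Λ₀(Γ)` does, is the union of the
`≡₀`-class of a wide subgraph `H`. Two non-adjacent pairs joined to each other span an induced
square, so every non-adjacent pair met along that class is a diagonal of a square in the
component of a square `Q₀ ⊆ H` of the square graph; and a vertex outside the support of this
component is adjacent to all other vertices of a hyperedge of the class containing it, and this
propagates along chains to every hyperedge of the class. So `Γ` is CFS, with `K` the complement of the support.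
Conversely, for a CFS graph `Ω ⋆ K` each square `Q` of the component makes `Q ⋆ K` wide, and
adjacent squares give wide subgraphs sharing a non-adjacent pair, so a single `≡₀`-class
covers `Γ`; a wide or strip `Γ` itself is excluded by the non-join hypothesis and by `Q₀`. -/

open Set

section Joins

variable {G : SimpleGraph V}

theorem NonAdjPair.symm {s t : V} (h : NonAdjPair G s t) : NonAdjPair G t s :=
  ⟨h.1.symm, fun ha => h.2 ha.symm⟩

theorem JoinDecomp.symm {L A B : Set V} (h : JoinDecomp G L A B) : JoinDecomp G L B A :=
  ⟨by rw [union_comm, h.1], fun b hb a ha => (h.2 a ha b hb).symm⟩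

theorem JoinDecomp.nonAdjPair_same_side {L A B : Set V} (h : JoinDecomp G L A B) {s t : V}
    (hst : NonAdjPair G s t) (hs : s ∈ L) (ht : t ∈ L) :
    (s ∈ A ∧ t ∈ A) ∨ (s ∈ B ∧ t ∈ B) := by
  rw [← h.1] at hs ht
  rcases hs with hs | hs <;> rcases ht with ht | ht
  · exact .inl ⟨hs, ht⟩
  · exact absurd (h.2 s hs t ht) hst.2
  · exact absurd (h.2 t ht s hs).symm hst.2
  · exact .inr ⟨hs, ht⟩

theorem IsWidePre.exists_joinDecomp_of_nonAdjPair {L : Set V} (hL : IsWidePre G L) {p q : V}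
    (hpq : NonAdjPair G p q) (hp : p ∈ L) (hq : q ∈ L) :
    ∃ A B, JoinDecomp G L A B ∧ p ∈ A ∧ q ∈ A ∧ HasNonAdjPair G B := by
  obtain ⟨A, B, hAB, hA, hB⟩ := hL
  rcases hAB.nonAdjPair_same_side hpq hp hq with ⟨hpA, hqA⟩ | ⟨hpB, hqB⟩
  · exact ⟨A, B, hAB, hpA, hqA, hB⟩
  · exact ⟨B, A, hAB.symm, hpB, hqB, hA⟩

theorem IsWidePre.union_of_adj {L K : Set V} (hL : IsWidePre G L)
    (hK : ∀ l ∈ L, ∀ k ∈ K, G.Adj l k) : IsWidePre G (L ∪ K) := by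
  obtain ⟨A, B, ⟨rfl, hAB⟩, hA, b, hb, b', hb', hbb'⟩ := hL
  refine ⟨A, B ∪ K, ⟨(union_assoc A B K).symm, ?_⟩, hA, b, .inl hb, b', .inl hb', hbb'⟩
  rintro a ha x (hx | hx)
  exacts [hAB a ha x hx, hK a (.inl ha) x hx]

theorem isInducedSquare_of_adj {a a' b b' : V} (ha : NonAdjPair G a a') (hb : NonAdjPair G b b')
    (hab : G.Adj a b) (hab' : G.Adj a b') (ha'b : G.Adj a' b) (ha'b' : G.Adj a' b') :
    IsInducedSquare G {a, b, a', b'} :=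
  ⟨a, b, a', b', rfl, hab, ha'b.symm, ha'b', hab'.symm, ha.1, hb.1, ha.2, hb.2⟩

theorem IsInducedSquare.isWidePre {Q : Set V} (hQ : IsInducedSquare G Q) : IsWidePre G Q := by
  obtain ⟨a, b, c, d, rfl, hab, hbc, hcd, hda, hac, hbd, hac', hbd'⟩ := hQ
  refine ⟨{a, c}, {b, d}, ⟨?_, ?_⟩, ⟨a, .inl rfl, c, .inr rfl, hac, hac'⟩,
    ⟨b, .inl rfl, d, .inr rfl, hbd, hbd'⟩⟩
  · ext x
    simp only [mem_union, mem_insert_iff, mem_singleton_iff]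
    tauto
  · rintro x (rfl | rfl) y (rfl | rfl)
    exacts [hab, hda.symm, hbc.symm, hcd]

theorem exists_isWide_superset [Finite V] {L : Set V} (hL : IsWidePre G L) :
    ∃ M, L ⊆ M ∧ IsWide G M := by
  obtain ⟨M, hLM, hM⟩ := (toFinite {M | IsWidePre G M}).exists_le_maximal hL
  exact ⟨M, hLM, hM.1, fun _ hL' hML' => hM.eq_of_le hL' hML'⟩

theorem univ_mem_lam0_iff : univ ∈ Lam G 0 ↔ IsWidePre G univ ∨ IsStripPre G univ := by
  refine ⟨fun h => h.imp (·.1) (·.1), fun h => h.imp (⟨·, ?_⟩) (⟨·, ?_, ?_⟩)⟩ <;>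
    exact fun _ _ h => (univ_subset_iff.1 h).symm

end Joins

section Strips

variable {G : SimpleGraph V}

theorem IsStripDecomp.mem_pair {L A K : Set V} (h : IsStripDecomp G L A K) {s t : V}
    (hst : NonAdjPair G s t) (hs : s ∈ L) (ht : t ∈ L) : s ∈ A ∧ t ∈ A := by
  obtain ⟨-, -, hK, hU, hJ⟩ := h
  rw [← hU] at hs ht
  rcases hs with hs | hs <;> rcases ht with ht | ht
  · exact ⟨hs, ht⟩
  · exact absurd (hJ s hs t ht) hst.2
  · exact absurd (hJ t ht s hs).symm hst.2
  · exact absurd (hK hs ht hst.1) hst.2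

theorem IsStripPre.exists_decomp {L : Set V} (h : IsStripPre G L) {p q : V}
    (hpq : NonAdjPair G p q) (hp : p ∈ L) (hq : q ∈ L) : ∃ K, IsStripDecomp G L {p, q} K := by
  obtain ⟨A, K, hd⟩ := h
  obtain ⟨hpA, hqA⟩ := hd.mem_pair hpq hp hq
  obtain ⟨⟨s, t, -, rfl⟩, hK⟩ := hd
  have hA : ({p, q} : Set V) = {s, t} := by
    simp only [mem_insert_iff, mem_singleton_iff] at hpA hqA
    rcases hpA with rfl | rfl <;> rcases hqA with rfl | rfl
    exacts [absurd rfl hpq.1, rfl, pair_comm _ _, absurd rfl hpq.1]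
  exact ⟨K, ⟨p, q, hpq, rfl⟩, hA ▸ hK⟩

theorem IsStripPre.not_adj {L : Set V} (h : IsStripPre G L) {p q x y : V}
    (hpq : NonAdjPair G p q) (hp : p ∈ L) (hq : q ∈ L)
    (hxy : NonAdjPair G x y) (hx : x ∈ L) (hy : y ∈ L) : ¬ G.Adj p x := by
  obtain ⟨K, hd⟩ := h.exists_decomp hpq hp hq
  rcases (hd.mem_pair hxy hx hy).1 with rfl | rfl
  exacts [G.irrefl, hpq.2]

theorem IsWidePre.not_subset_of_isStripPre {L L' : Set V} (hL : IsWidePre G L)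
    (hL' : IsStripPre G L') (h : L ⊆ L') : False := by
  obtain ⟨A, B, hAB, ⟨a, ha, a', ha', haa'⟩, ⟨b, hb, b', hb', hbb'⟩⟩ := hL
  have hA : A ⊆ L' := fun x hx => h (hAB.1 ▸ .inl hx)
  have hB : B ⊆ L' := fun x hx => h (hAB.1 ▸ .inr hx)
  exact hL'.not_adj haa' (hA ha) (hA ha') hbb' (hB hb) (hB hb') (hAB.2 a ha b hb)

/-- Otherwise `{p, q} ⋆ (K ∪ B)` would be a wide subgraph containing the strip `{p, q} ⋆ K`. -/
theorem IsStrip.not_hasNonAdjPair_of_adj [Finite V] {S B : Set V} (hS : IsStrip G S) {p q : V}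
    (hpq : NonAdjPair G p q) (hp : p ∈ S) (hq : q ∈ S) (hB : HasNonAdjPair G B)
    (hadj : ∀ a ∈ ({p, q} : Set V), ∀ x ∈ B, G.Adj a x) : False := by
  obtain ⟨K, ⟨-, -, -, hSK, hK⟩⟩ := hS.1.exists_decomp hpq hp hq
  obtain ⟨b, hb, b', hb', hbb'⟩ := hB
  have hW : IsWidePre G ({p, q} ∪ (K ∪ B)) := by
    refine ⟨{p, q}, K ∪ B, ⟨rfl, ?_⟩, ⟨p, .inl rfl, q, .inr rfl, hpq⟩,
      ⟨b, .inr hb, b', .inr hb', hbb'⟩⟩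
    rintro a ha x (hx | hx)
    exacts [hK a ha x hx, hadj a ha x hx]
  obtain ⟨M, hWM, hM⟩ := exists_isWide_superset hW
  have hSW : S ⊆ {p, q} ∪ (K ∪ B) := hSK ▸ union_subset_union_right _ subset_union_left
  have hBS : B ⊆ S := fun x hx => (hS.2.1 M hM (hSW.trans hWM)) ▸ hWM (.inr (.inr hx))
  exact hS.1.not_adj hpq hp hq hbb' (hBS hb) (hBS hb') (hadj p (.inl rfl) b hb)

theorem IsStrip.eq_of_mem_lam0 [Finite V] {S L : Set V} (hS : IsStrip G S) (hL : L ∈ Lam G 0)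
    {p q : V} (hpq : NonAdjPair G p q) (hpS : p ∈ S) (hqS : q ∈ S) (hpL : p ∈ L)
    (hqL : q ∈ L) : L = S := by
  rcases hL with hL | hL
  · obtain ⟨A, B, hAB, hpA, hqA, hB⟩ := hL.1.exists_joinDecomp_of_nonAdjPair hpq hpL hqL
    refine (hS.not_hasNonAdjPair_of_adj hpq hpS hqS hB fun a ha x hx => hAB.2 a ?_ x hx).elim
    rcases ha with rfl | rfl
    exacts [hpA, hqA]
  · obtain ⟨K, ⟨hpair, hKne, -, hSK, hK⟩⟩ := hS.1.exists_decomp hpq hpS hqS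
    obtain ⟨K', ⟨-, -, -, hLK', hK'⟩⟩ := hL.1.exists_decomp hpq hpL hqL
    have hclique : G.IsClique (K ∪ K') := fun x hx y hy hxy => by
      by_contra hn
      exact hS.not_hasNonAdjPair_of_adj hpq hpS hqS ⟨x, hx, y, hy, hxy, hn⟩
        fun a ha z hz => hz.elim (hK a ha z) (hK' a ha z)
    have hT : IsStripPre G ({p, q} ∪ (K ∪ K')) :=
      ⟨{p, q}, K ∪ K', hpair, hKne.mono subset_union_left, hclique, rfl,
        fun a ha z hz => hz.elim (hK a ha z) (hK' a ha z)⟩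
    rw [hL.2.2 _ hT (hLK' ▸ union_subset_union_right _ subset_union_right),
      hS.2.2 _ hT (hSK ▸ union_subset_union_right _ subset_union_left)]

theorem IsStrip.eq_of_reflTransGen [Finite V] {S L : Set V} (hS : IsStrip G S)
    (h : ReflTransGen (hypStep G (Lam G 0)) S L) : L = S := by
  induction h with
  | refl => rfl
  | tail _ hstep ih =>
    subst ih
    obtain ⟨-, hL, p, q, hpq, hp, hq⟩ := hstep
    exact hS.eq_of_mem_lam0 hL hpq hp.1 hq.1 hp.2 hq.2

theorem IsWide.of_reflTransGen [Finite V] {H L : Set V} (hH : IsWide G H)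
    (h : ReflTransGen (hypStep G (Lam G 0)) H L) : IsWide G L := by
  induction h with
  | refl => exact hH
  | tail _ hstep ih =>
    obtain ⟨hM, hL | hL, p, q, hpq, hp, hq⟩ := hstep
    · exact hL
    · exact hL.eq_of_mem_lam0 hM hpq hp.2 hq.2 hp.1 hq.1 ▸ ih

end Strips

section SquareComponents

variable {G : SimpleGraph V}

instance (E : Set (Set V)) : Std.Symm (hypStep G E) :=
  ⟨fun _ _ ⟨hH, hH', s, t, hst, hs, ht⟩ => ⟨hH', hH, s, t, hst, hs.symm, ht.symm⟩⟩

def squareComponent (G : SimpleGraph V) (Q₀ : Set V) : Set (Set V) :=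
  {Q | IsInducedSquare G Q ∧ ReflTransGen (sqAdj G) Q₀ Q}

def IsComponentDiagonal (G : SimpleGraph V) (Q₀ : Set V) (p q : V) : Prop :=
  NonAdjPair G p q ∧ ∃ Q ∈ squareComponent G Q₀, p ∈ Q ∧ q ∈ Q

def DiagonalsInComponent (G : SimpleGraph V) (Q₀ L : Set V) : Prop :=
  ∀ x ∈ L, ∀ y ∈ L, NonAdjPair G x y → IsComponentDiagonal G Q₀ x y

variable {Q₀ : Set V} {p q : V}

theorem IsComponentDiagonal.symm (h : IsComponentDiagonal G Q₀ p q) :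
    IsComponentDiagonal G Q₀ q p :=
  ⟨h.1.symm, h.2.imp fun _ hQ => ⟨hQ.1, hQ.2.2, hQ.2.1⟩⟩

theorem IsComponentDiagonal.mem_support (h : IsComponentDiagonal G Q₀ p q) :
    p ∈ ⋃₀ squareComponent G Q₀ :=
  h.2.imp fun _ hQ => ⟨hQ.1, hQ.2.1⟩

theorem IsComponentDiagonal.ne_of_notMem_support {v : V} (h : IsComponentDiagonal G Q₀ p q)
    (hv : v ∉ ⋃₀ squareComponent G Q₀) : p ≠ v :=
  fun hpv => hv (hpv ▸ h.mem_support)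

/-- `{p, x, q, y}` is a square sharing the diagonal `{p, q}` with a square of the component. -/
theorem IsComponentDiagonal.of_adj (h : IsComponentDiagonal G Q₀ p q) {x y : V}
    (hxy : NonAdjPair G x y) (hxp : G.Adj x p) (hxq : G.Adj x q) (hyp : G.Adj y p)
    (hyq : G.Adj y q) : IsComponentDiagonal G Q₀ x y := by
  obtain ⟨hpq, Q, ⟨hQ, hQ₀Q⟩, hpQ, hqQ⟩ := h
  have hQ' := isInducedSquare_of_adj hpq hxy hxp.symm hyp.symm hxq.symm hyq.symm
  have hQQ' : ReflTransGen (sqAdj G) Q {p, x, q, y} := by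
    by_cases hne : Q = {p, x, q, y}
    · exact hne ▸ .refl
    · exact .single ⟨hQ, hQ', hne, p, q, hpq, ⟨hpQ, .inl rfl⟩, ⟨hqQ, .inr (.inr (.inl rfl))⟩⟩
  exact ⟨hxy, _, ⟨hQ', hQ₀Q.trans hQQ'⟩, .inr (.inl rfl), .inr (.inr (.inr rfl))⟩

theorem IsComponentDiagonal.of_joinDecomp {L A B : Set V} (hAB : JoinDecomp G L A B)
    (h : IsComponentDiagonal G Q₀ p q) (hp : p ∈ A) (hq : q ∈ A) {x y : V}
    (hxy : NonAdjPair G x y) (hx : x ∈ B) (hy : y ∈ B) : IsComponentDiagonal G Q₀ x y :=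
  h.of_adj hxy (hAB.2 p hp x hx).symm (hAB.2 q hq x hx).symm (hAB.2 p hp y hy).symm
    (hAB.2 q hq y hy).symm

theorem IsWidePre.diagonalsInComponent {L : Set V} (hL : IsWidePre G L)
    (h : IsComponentDiagonal G Q₀ p q) (hp : p ∈ L) (hq : q ∈ L) :
    DiagonalsInComponent G Q₀ L := by
  obtain ⟨A, B, hAB, hpA, hqA, b, hb, b', hb', hbb'⟩ :=
    hL.exists_joinDecomp_of_nonAdjPair h.1 hp hq
  intro x hx y hy hxy
  rcases hAB.nonAdjPair_same_side hxy hx hy with ⟨hxA, hyA⟩ | ⟨hxB, hyB⟩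
  · exact (h.of_joinDecomp hAB hpA hqA hbb' hb hb').of_joinDecomp hAB.symm hb hb' hxy hxA hyA
  · exact h.of_joinDecomp hAB hpA hqA hxy hxB hyB

theorem IsComponentDiagonal.adj_of_notMem_support {v z : V}
    (h : IsComponentDiagonal G Q₀ p q) (hv : v ∉ ⋃₀ squareComponent G Q₀) (hvp : G.Adj v p)
    (hvq : G.Adj v q) (hzv : z ≠ v) (hzp : G.Adj z p) (hzq : G.Adj z q) : G.Adj v z := by
  by_contra hvz
  exact hv (h.of_adj ⟨hzv.symm, hvz⟩ hvp hvq hzp hzq).mem_support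

theorem IsWidePre.adj_of_notMem_support {L : Set V} (hL : IsWidePre G L)
    (hdiag : DiagonalsInComponent G Q₀ L) {v : V} (hv : v ∉ ⋃₀ squareComponent G Q₀)
    (hpq : NonAdjPair G p q) (hp : p ∈ L) (hq : q ∈ L) (hvp : G.Adj v p) (hvq : G.Adj v q) :
    ∀ z ∈ L, z ≠ v → G.Adj v z := by
  obtain ⟨A, B, hAB, hpA, hqA, b, hb, b', hb', hbb'⟩ :=
    hL.exists_joinDecomp_of_nonAdjPair hpq hp hq
  have hBL : B ⊆ L := fun x hx => hAB.1 ▸ .inr hx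
  have hadjB : ∀ z ∈ B, z ≠ v → G.Adj v z := fun z hz hzv =>
    (hdiag p hp q hq hpq).adj_of_notMem_support hv hvp hvq hzv (hAB.2 p hpA z hz).symm
      (hAB.2 q hqA z hz).symm
  have hbb'diag := hdiag b (hBL hb) b' (hBL hb') hbb'
  intro z hz hzv
  rcases hAB.1 ▸ hz with hzA | hzB
  · exact hbb'diag.adj_of_notMem_support hv (hadjB b hb (hbb'diag.ne_of_notMem_support hv))
      (hadjB b' hb' (hbb'diag.symm.ne_of_notMem_support hv)) hzv (hAB.2 z hzA b hb)
      (hAB.2 z hzA b' hb')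
  · exact hadjB z hzB hzv

end SquareComponents

section HypergraphClasses

variable {G : SimpleGraph V} {Q₀ H : Set V}

theorem IsWide.diagonalsInComponent_of_reflTransGen [Finite V] (hH : IsWide G H)
    (hdiag : DiagonalsInComponent G Q₀ H) {L : Set V}
    (h : ReflTransGen (hypStep G (Lam G 0)) H L) : DiagonalsInComponent G Q₀ L := by
  induction h with
  | refl => exact hdiag
  | @tail M L hHM hstep ih =>
    have hL := (hH.of_reflTransGen (hHM.tail hstep)).1
    obtain ⟨-, -, p, q, hpq, hp, hq⟩ := hstep
    exact hL.diagonalsInComponent (ih p hp.1 q hq.1 hpq) hp.2 hq.2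

/-- The shared pair of two consecutive hyperedges consists of neighbours of `v`, since its
vertices lie in the support. -/
theorem IsWide.adj_of_reflTransGen [Finite V] (hH : IsWide G H)
    (hdiag : DiagonalsInComponent G Q₀ H) {v : V} (hv : v ∉ ⋃₀ squareComponent G Q₀)
    {L M : Set V} (hHL : ReflTransGen (hypStep G (Lam G 0)) H L)
    (hL : ∀ z ∈ L, z ≠ v → G.Adj v z) (hLM : ReflTransGen (hypStep G (Lam G 0)) L M) :
    ∀ z ∈ M, z ≠ v → G.Adj v z := by
  induction hLM with
  | refl => exact hL
  | @tail M M' hLM hstep ih =>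
    have hHM := hHL.trans hLM
    have hHM' := hHM.tail hstep
    obtain ⟨-, -, p, q, hpq, hp, hq⟩ := hstep
    have hpqdiag := hH.diagonalsInComponent_of_reflTransGen hdiag hHM p hp.1 q hq.1 hpq
    exact (hH.of_reflTransGen hHM').1.adj_of_notMem_support
      (hH.diagonalsInComponent_of_reflTransGen hdiag hHM') hv hpq hp.2 hq.2
      (ih p hp.1 (hpqdiag.ne_of_notMem_support hv))
      (ih q hq.1 (hpqdiag.symm.ne_of_notMem_support hv))

theorem IsWide.adj_of_covers [Finite V] (hH : IsWide G H)
    (hdiag : DiagonalsInComponent G Q₀ H)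
    (hcover : univ ⊆ ⋃₀ {L | L ∈ Lam G 0 ∧ ReflTransGen (hypStep G (Lam G 0)) H L})
    {v w : V} (hv : v ∉ ⋃₀ squareComponent G Q₀) (hwv : w ≠ v) : G.Adj v w := by
  obtain ⟨L, ⟨-, hHL⟩, hvL⟩ := hcover (mem_univ v)
  obtain ⟨M, ⟨-, hHM⟩, hwM⟩ := hcover (mem_univ w)
  have hL : ∀ z ∈ L, z ≠ v → G.Adj v z := fun z hz hzv => by
    by_contra hvz
    exact hv (hH.diagonalsInComponent_of_reflTransGen hdiag hHL v hvL z hz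
      ⟨hzv.symm, hvz⟩).mem_support
  exact hH.adj_of_reflTransGen hdiag hv hHL hL ((symm hHL).trans hHM) w hwM hwv

theorem IsWide.isCFS_of_covers [Finite V] (hH : IsWide G H)
    (hcover : univ ⊆ ⋃₀ {L | L ∈ Lam G 0 ∧ ReflTransGen (hypStep G (Lam G 0)) H L}) :
    IsCFS G := by
  obtain ⟨A, B, hAB, ⟨a, ha, a', ha', haa'⟩, ⟨b, hb, b', hb', hbb'⟩⟩ := hH.1
  have hQ₀ := isInducedSquare_of_adj haa' hbb' (hAB.2 a ha b hb) (hAB.2 a ha b' hb')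
    (hAB.2 a' ha' b hb) (hAB.2 a' ha' b' hb')
  have hdiag : DiagonalsInComponent G {a, b, a', b'} H :=
    hH.1.diagonalsInComponent ⟨haa', _, ⟨hQ₀, .refl⟩, .inl rfl, .inr (.inr (.inl rfl))⟩
      (hAB.1 ▸ .inl ha) (hAB.1 ▸ .inl ha')
  refine ⟨_, _, union_compl_self (⋃₀ squareComponent G {a, b, a', b'}), ?_, ?_, _, hQ₀, rfl⟩
  · exact fun v hv w _ hvw => hH.adj_of_covers hdiag hcover hv hvw.symm
  · exact fun o ho k hk => (hH.adj_of_covers hdiag hcover hk (ne_of_mem_of_not_mem ho hk)).symm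

theorem isCFS_of_mem_lam1 [Finite V] {Z : Set V} (hZ : Z ∈ Lam G 1) (hZu : univ ⊆ Z)
    (h0 : univ ∉ Lam G 0) : IsCFS G := by
  obtain ⟨H, hH | hH, rfl⟩ := hZ
  · exact hH.isCFS_of_covers hZu
  · have hHu : H = univ :=
      univ_subset_iff.1 (hZu.trans (sUnion_subset fun L hL => (hH.eq_of_reflTransGen hL.2).le))
    exact (h0 (hHu ▸ .inr hH)).elim

theorem IsCFS.not_isStripPre_univ (h : IsCFS G) : ¬ IsStripPre G univ := fun hS => by
  obtain ⟨-, -, -, -, -, Q₀, hQ₀, -⟩ := h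
  exact hQ₀.isWidePre.not_subset_of_isStripPre hS (subset_univ _)

theorem IsCFS.exists_isWide_covers [Finite V] (h : IsCFS G) :
    ∃ H, IsWide G H ∧
      univ ⊆ ⋃₀ {L | L ∈ Lam G 0 ∧ ReflTransGen (hypStep G (Lam G 0)) H L} := by
  obtain ⟨_, K, hunion, -, hjoin, Q₀, hQ₀, rfl⟩ := h
  have hwide : ∀ Q ∈ squareComponent G Q₀, IsWidePre G (Q ∪ K) := fun Q hQ =>
    hQ.1.isWidePre.union_of_adj fun x hx k hk => hjoin x ⟨Q, hQ, hx⟩ k hk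
  obtain ⟨H, hH, hHw⟩ := exists_isWide_superset (hwide Q₀ ⟨hQ₀, .refl⟩)
  have hchain : ∀ Q, ReflTransGen (sqAdj G) Q₀ Q →
      ∃ L, IsWide G L ∧ Q ∪ K ⊆ L ∧ ReflTransGen (hypStep G (Lam G 0)) H L := by
    intro Q h
    induction h with
    | refl => exact ⟨H, hHw, hH, .refl⟩
    | @tail Q Q' hQ₀Q hQQ' ih =>
      obtain ⟨L, hL, hQL, hHL⟩ := ih
      obtain ⟨L', hQL', hL'⟩ := exists_isWide_superset (hwide Q' ⟨hQQ'.2.1, hQ₀Q.tail hQQ'⟩)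
      obtain ⟨-, -, -, p, q, hpq, hp, hq⟩ := hQQ'
      exact ⟨L', hL', hQL', hHL.tail ⟨.inl hL, .inl hL', p, q, hpq,
        ⟨hQL (.inl hp.1), hQL' (.inl hp.2)⟩, ⟨hQL (.inl hq.1), hQL' (.inl hq.2)⟩⟩⟩
  refine ⟨H, hHw, fun v _ => ?_⟩
  rcases hunion.symm ▸ mem_univ v with ⟨Q, hQ, hvQ⟩ | hvK
  · obtain ⟨L, hL, hQL, hHL⟩ := hchain Q hQ.2
    exact ⟨L, ⟨.inl hL, hHL⟩, hQL (.inl hvQ)⟩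
  · exact ⟨H, ⟨.inl hHw, .refl⟩, hH (.inr hvK)⟩

end HypergraphClasses

/-- `Γ` has hypergraph index `1` iff `Γ` is CFS and `Γ` is not a
join `A ⋆ B` with `A` and `B` each containing a pair of non-adjacent vertices. -/
theorem hypergraph_index_one_iff_CFS [Finite V] (G : SimpleGraph V) :
    HasHypIndex G 1 ↔
      IsCFS G ∧
      ¬ ∃ A B : Set V, A ∪ B = Set.univ ∧ (∀ a ∈ A, ∀ b ∈ B, G.Adj a b) ∧
          HasNonAdjPair G A ∧ HasNonAdjPair G B := by
  have hjoin : (∃ A B : Set V, A ∪ B = univ ∧ (∀ a ∈ A, ∀ b ∈ B, G.Adj a b) ∧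
      HasNonAdjPair G A ∧ HasNonAdjPair G B) ↔ IsWidePre G univ := by
    simp only [IsWidePre, JoinDecomp, and_assoc]
  have hlam0 : (∃ H ∈ Lam G 0, univ ⊆ H) ↔ univ ∈ Lam G 0 :=
    ⟨fun ⟨_, hH, hu⟩ => univ_subset_iff.1 hu ▸ hH, fun h => ⟨univ, h, subset_rfl⟩⟩
  rw [hjoin]
  constructor
  · rintro ⟨-, ⟨Z, hZ, hZu⟩, hmin⟩
    have h0 : univ ∉ Lam G 0 := fun h => hmin 0 one_pos (hlam0.2 h)
    exact ⟨isCFS_of_mem_lam1 hZ hZu h0, fun hW => h0 (univ_mem_lam0_iff.2 (.inl hW))⟩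
  · rintro ⟨hCFS, hW⟩
    obtain ⟨H, hH, hcover⟩ := hCFS.exists_isWide_covers
    refine ⟨⟨H, hH⟩, ⟨_, ⟨H, .inl hH, rfl⟩, hcover⟩, fun h' hh' => ?_⟩
    obtain rfl : h' = 0 := by omega
    rw [hlam0, univ_mem_lam0_iff]
    exact fun h => h.elim hW hCFS.not_isStripPre_univ
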